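/- arXiv:2111.07134 — 9 statements merged into one kernel-verified Lean document; each statement's English description precedes it below -/
import Mathlib

section
/- The system of equations (λ(s)/p(s))·q(s)²/(1−q(s)) = Φ(q) for all s ∈ S has at most one solution q ∈ (0,1)^S. -/
/-!
Put `c = Φ q` and `ψ x = (-log (1 - x) - x) (1 - x) / x²`. The equation at `s` reads
`λ s q_s² = c p_s (1 - q_s)`, so `c p_s (1 - q_s) / q_s = λ s q_s` and
`λ s (-log (1 - q_s) - q_s) = c p_s ψ q_s`. Summing, `c U(q) = V(q)` becomes `∑ p_s ψ q_s = 1`.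
Each `q_s` is a strictly increasing function of `c`, while `ψ` is strictly decreasing on `(0, 1)`
(its derivative has the sign of `(2 - x) log (1 - x) + 2x < 0`). Hence of two solutions the one
with the larger `Φ` is coordinatewise larger, and equality of the two sums forces them to agree.
-/

open Set Real

lemma two_sub_mul_log_one_sub_add_two_mul_neg {x : ℝ} (hx₀ : 0 < x) (hx₁ : x < 1) :
    (2 - x) * log (1 - x) + 2 * x < 0 := by
  set F : ℝ → ℝ := fun y ↦ (2 - y) * log (1 - y) + 2 * y
  have hF' : ∀ y < 1, HasDerivAt F (-log (1 - y) - y / (1 - y)) y := by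
    intro y hy
    have h₁ : 1 - y ≠ 0 := (sub_pos.2 hy).ne'
    have h := (((hasDerivAt_id' y).const_sub 2).fun_mul
      (((hasDerivAt_id' y).const_sub 1).log h₁)).fun_add ((hasDerivAt_id' y).const_mul 2)
    refine h.congr_deriv ?_
    field_simp
    ring
  have hF : StrictAntiOn F (Ico 0 1) := by
    refine strictAntiOn_of_deriv_neg (convex_Ico 0 1)
      (fun y hy ↦ (hF' y hy.2).continuousAt.continuousWithinAt) fun y hy ↦ ?_
    rw [interior_Ico] at hy
    have h₁ : 0 < 1 - y := sub_pos.2 hy.2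
    have hlog : log (1 - y)⁻¹ < (1 - y)⁻¹ - 1 :=
      log_lt_sub_one_of_pos (inv_pos.2 h₁) (inv_ne_one.2 (by linarith [hy.1]))
    have hinv : (1 - y)⁻¹ - 1 = y / (1 - y) := by field_simp; ring
    rw [log_inv, hinv] at hlog
    rw [(hF' y hy.2).deriv]
    linarith
  simpa [F] using hF (left_mem_Ico.2 one_pos) ⟨hx₀.le, hx₁⟩ hx₀

noncomputable def psi (x : ℝ) : ℝ := (-log (1 - x) - x) * (1 - x) / x ^ 2

lemma hasDerivAt_psi {x : ℝ} (hx₀ : x ≠ 0) (hx₁ : x < 1) :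
    HasDerivAt psi (((2 - x) * log (1 - x) + 2 * x) / x ^ 3) x := by
  have h₁ : 1 - x ≠ 0 := (sub_pos.2 hx₁).ne'
  have h := (((((hasDerivAt_id' x).const_sub 1).log h₁).fun_neg.fun_sub
    (hasDerivAt_id' x)).fun_mul ((hasDerivAt_id' x).const_sub 1)).fun_div
    (hasDerivAt_pow 2 x) (pow_ne_zero 2 hx₀)
  refine h.congr_deriv ?_
  field_simp
  ring

lemma strictAntiOn_psi : StrictAntiOn psi (Ioo 0 1) := by
  refine strictAntiOn_of_deriv_neg (convex_Ioo 0 1)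
    (fun x hx ↦ (hasDerivAt_psi hx.1.ne' hx.2).continuousAt.continuousWithinAt) fun x hx ↦ ?_
  rw [interior_Ioo] at hx
  rw [(hasDerivAt_psi hx.1.ne' hx.2).deriv]
  exact div_neg_of_neg_of_pos (two_sub_mul_log_one_sub_add_two_mul_neg hx.1 hx.2) (pow_pos hx.1 3)

lemma strictMonoOn_mul_sq_div_one_sub {a : ℝ} (ha : 0 < a) :
    StrictMonoOn (fun x : ℝ ↦ a * x ^ 2 / (1 - x)) (Ioo 0 1) := by
  intro x hx y hy hxy
  have hx₁ : 0 < 1 - x := sub_pos.2 hx.2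
  have hy₁ : 0 < 1 - y := sub_pos.2 hy.2
  rw [div_lt_div_iff₀ hx₁ hy₁]
  nlinarith [mul_pos (mul_pos ha (sub_pos.2 hxy)) (add_pos hx.1 (mul_pos hy.1 hx₁))]

lemma StrictAntiOn.eq_of_le_of_sum_mul_eq {ι : Type*} {s : Finset ι} {f : ℝ → ℝ}
    {I : Set ℝ} (hf : StrictAntiOn f I) {w x y : ι → ℝ} (hw : ∀ i ∈ s, 0 < w i)
    (hx : ∀ i ∈ s, x i ∈ I) (hy : ∀ i ∈ s, y i ∈ I) (hxy : ∀ i ∈ s, x i ≤ y i)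
    (hsum : ∑ i ∈ s, w i * f (x i) = ∑ i ∈ s, w i * f (y i)) : ∀ i ∈ s, x i = y i := by
  have hle : ∀ i ∈ s, w i * f (y i) ≤ w i * f (x i) := fun i hi ↦
    mul_le_mul_of_nonneg_left (hf.antitoneOn (hx i hi) (hy i hi) (hxy i hi)) (hw i hi).le
  intro i hi
  have := (Finset.sum_eq_sum_iff_of_le hle).1 hsum.symm i hi
  exact hf.injOn (hx i hi) (hy i hi) (mul_left_cancel₀ (hw i hi).ne' this).symm

section Solution

variable {S : Type*} [Fintype S] {lam : S → ℝ} {p : S → ℕ} {q : S → ℝ} {c : ℝ}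

lemma sum_mul_psi_eq_one [Nonempty S] (hlam : ∀ s, 0 < lam s) (hp : ∀ s, 0 < p s)
    (hq : ∀ s, q s ∈ Ioo (0 : ℝ) 1)
    (hc : c = (-∑ t, lam t * log (1 - q t)) / (1 + ∑ t, (p t : ℝ) * (1 - q t) / q t))
    (heq : ∀ s, lam s / p s * q s ^ 2 / (1 - q s) = c) :
    ∑ s, (p s : ℝ) * psi (q s) = 1 := by
  have hp' : ∀ s, (0 : ℝ) < p s := fun s ↦ Nat.cast_pos.2 (hp s)
  have hq₁ : ∀ s, 0 < 1 - q s := fun s ↦ sub_pos.2 (hq s).2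
  obtain ⟨s₀⟩ := ‹Nonempty S›
  have hc₀ : 0 < c := by
    rw [← heq s₀]
    have := hlam s₀; have := hp' s₀; have := (hq s₀).1; have := hq₁ s₀
    positivity
  have hcoord : ∀ s, lam s * q s ^ 2 = c * p s * (1 - q s) := fun s ↦ by
    rw [← heq s]
    field_simp [(hp' s).ne', (hq₁ s).ne']
  have hU : 0 < 1 + ∑ t, (p t : ℝ) * (1 - q t) / q t := by
    have : 0 ≤ ∑ t, (p t : ℝ) * (1 - q t) / q t := Finset.sum_nonneg fun t _ ↦
      div_nonneg (mul_nonneg (hp' t).le (hq₁ t).le) (hq t).1.le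
    linarith
  have hV : c * (1 + ∑ t, (p t : ℝ) * (1 - q t) / q t) = -∑ t, lam t * log (1 - q t) := by
    rw [hc, div_mul_cancel₀ _ hU.ne']
  have hlin : ∀ s, lam s * q s = c * ((p s : ℝ) * (1 - q s) / q s) := fun s ↦ by
    field_simp [(hq s).1.ne']
    linarith [hcoord s]
  have hlog : ∀ s, lam s * (-log (1 - q s) - q s) = c * ((p s : ℝ) * psi (q s)) := fun s ↦ by
    unfold psi
    field_simp [(hq s).1.ne']
    linear_combination (-log (1 - q s) - q s) * hcoord s
  refine mul_left_cancel₀ hc₀.ne' ?_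
  calc c * ∑ s, (p s : ℝ) * psi (q s)
      = -∑ t, lam t * log (1 - q t) - ∑ t, lam t * q t := by
        simp only [Finset.mul_sum, ← hlog, mul_sub, Finset.sum_sub_distrib,
          Finset.sum_neg_distrib, mul_neg]
    _ = c * (1 + ∑ t, (p t : ℝ) * (1 - q t) / q t)
          - c * ∑ t, (p t : ℝ) * (1 - q t) / q t := by
        rw [← hV, Finset.mul_sum]
        simp only [hlin]
    _ = c * 1 := by ring

end Solution

/-- The system of equations (λ(s)/p(s))·q(s)²/(1−q(s)) = Φ(q) for all s ∈ S has at most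
one solution q ∈ (0,1)^S, where Φ(q) = V(q)/U(q) with
V(q) = −∑ λ(t)·log(1−q(t)) and U(q) = 1 + ∑ p(t)·(1−q(t))/q(t). -/
theorem at_most_one_solution
    {S : Type*} [Fintype S] [Nonempty S]
    (lam : S → ℝ) (p : S → ℕ)
    (hlam : ∀ s, lam s ∈ Set.Ioo (0:ℝ) 1) (hp : ∀ s, 1 ≤ p s)
    (Φ : (S → ℝ) → ℝ)
    (hΦ : ∀ q : S → ℝ, Φ q =
      (-∑ t, lam t * Real.log (1 - q t)) / (1 + ∑ t, (p t : ℝ) * (1 - q t) / q t))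
    (q q' : S → ℝ)
    (hq : ∀ s, q s ∈ Set.Ioo (0:ℝ) 1) (hq' : ∀ s, q' s ∈ Set.Ioo (0:ℝ) 1)
    (heq : ∀ s, lam s / (p s : ℝ) * (q s) ^ 2 / (1 - q s) = Φ q)
    (heq' : ∀ s, lam s / (p s : ℝ) * (q' s) ^ 2 / (1 - q' s) = Φ q') :
    q = q' := by
  have hψ := sum_mul_psi_eq_one (fun s ↦ (hlam s).1) hp hq (hΦ q) heq
  have hψ' := sum_mul_psi_eq_one (fun s ↦ (hlam s).1) hp hq' (hΦ q') heq'
  wlog hle : Φ q ≤ Φ q' generalizing q q'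
  · exact (this q' q hq' hq heq' heq hψ' hψ (le_of_not_ge hle)).symm
  have hqq' : ∀ s, q s ≤ q' s := fun s ↦
    (strictMonoOn_mul_sq_div_one_sub (div_pos (hlam s).1 (Nat.cast_pos.2 (hp s)))).le_iff_le
      (hq s) (hq' s) |>.1 (by rw [heq s, heq' s]; exact hle)
  funext s
  exact strictAntiOn_psi.eq_of_le_of_sum_mul_eq (fun s _ ↦ Nat.cast_pos.2 (hp s))
    (fun s _ ↦ hq s) (fun s _ ↦ hq' s) (fun s _ ↦ hqq' s) (hψ.trans hψ'.symm) s
    (Finset.mem_univ s)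
end

section
/- If ∑_{s∈S} p(s) ≥ 3, then the system of equations (λ(s)/p(s))·q(s)²/(1−q(s)) = Φ(q) for all s ∈ S has exactly one solution q ∈ (0,1)^S. -/
/-!
Each equation says `a_s q_s² / (1 - q_s) = c` with `a_s = λ(s)/p(s)` and `c = Φ(q)` common to
all `s`, and for `c > 0` it has exactly one root `q_s(c) ∈ (0,1)`. Along the curve `c ↦ q(c)`
the quantity `c·U(q(c)) - V(q(c))` simplifies to `D(c) = c + ∑ λ(s) (q_s + log (1 - q_s))`, so
solutions correspond to positive zeros of `D`. Now `D(0) = 0` and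
`D'(c) = 1 - ∑ p(s) (1 - q_s) / (2 - q_s)` increases strictly, from `1 - ∑ p(s) / 2 < 0` near
`0` to positive values for large `c`: `D` is strictly convex, dips below `0` and then grows
without bound, hence has exactly one positive zero.
-/

open Real Set

theorem existsUnique_pos_eq_zero_of_strictConvexOn {f : ℝ → ℝ}
    (hconv : StrictConvexOn ℝ (Ici 0) f) (hf : ContinuousOn f (Ici 0)) (h0 : f 0 = 0)
    (hneg : ∃ x, 0 < x ∧ f x < 0) (hpos : ∃ x, 0 < x ∧ 0 < f x) :
    ∃! x, 0 < x ∧ f x = 0 := by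
  obtain ⟨x₁, hx₁, hfx₁⟩ := hneg
  obtain ⟨x₂, hx₂, hfx₂⟩ := hpos
  have hpos_of_mem (z : ℝ) (hz : z ∈ uIcc x₁ x₂) : 0 < z := (lt_min hx₁ hx₂).trans_le hz.1
  obtain ⟨z, hz, hfz⟩ := intermediate_value_uIcc (hf.mono fun z hz => (hpos_of_mem z hz).le)
    (mem_uIcc.2 (Or.inl ⟨hfx₁.le, hfx₂.le⟩))
  refine ⟨z, ⟨hpos_of_mem z hz, hfz⟩, ?_⟩
  have hlt (y z : ℝ) (hy : 0 < y) (hyz : y < z) (hfy : f y = 0) (hfz : f z = 0) : False := by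
    have := hconv.slope_strict_mono_adjacent self_mem_Ici (hy.trans hyz).le hy hyz
    simp [h0, hfy, hfz] at this
  rintro y ⟨hy, hfy⟩
  rcases lt_trichotomy y z with h | h | h
  · exact (hlt y z hy h hfy hfz).elim
  · exact h
  · exact (hlt z y (hpos_of_mem z hz) h hfz hfy).elim

theorem existsUnique_pos_eq_zero_of_strictMonoOn_deriv {f f' : ℝ → ℝ}
    (hf : ContinuousOn f (Ici 0)) (hf' : ∀ x, 0 < x → HasDerivAt f (f' x) x)
    (hmono : StrictMonoOn f' (Ioi 0)) (h0 : f 0 = 0)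
    (hneg : ∃ x, 0 < x ∧ f' x < 0) (hpos : ∃ x, 0 < x ∧ 0 < f' x) :
    ∃! x, 0 < x ∧ f x = 0 := by
  have hconv : StrictConvexOn ℝ (Ici 0) f := by
    refine StrictMonoOn.strictConvexOn_of_deriv (convex_Ici 0) hf ?_
    rw [interior_Ici]
    intro x hx y hy hxy
    rw [(hf' x hx).deriv, (hf' y hy).deriv]
    exact hmono hx hy hxy
  refine existsUnique_pos_eq_zero_of_strictConvexOn hconv hf h0 ?_ ?_
  · obtain ⟨x, hx, hf'x⟩ := hneg
    have := hconv.slope_lt_of_hasDerivAt self_mem_Ici hx.le hx (hf' x hx)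
    rw [slope_def_field, h0, sub_zero, sub_zero, div_lt_iff₀ hx] at this
    exact ⟨x, hx, by nlinarith⟩
  · obtain ⟨x, hx, hf'x⟩ := hpos
    -- the tangent line at `x` is above `0` at `y`, and `f` is above its tangent
    set y := x + (|f x| + 1) / f' x
    have hxy : x < y := lt_add_of_pos_right x (by positivity)
    have := hconv.lt_slope_of_hasDerivAt hx.le (hx.trans hxy).le hxy (hf' x hx)
    rw [slope_def_field, lt_div_iff₀ (sub_pos.2 hxy)] at this
    have hrise : f' x * (y - x) = |f x| + 1 := by
      simp only [y, add_sub_cancel_left]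
      field_simp
    exact ⟨y, hx.trans hxy, by linarith [neg_abs_le (f x)]⟩

namespace PhiSystem

/-- For `a > 0` and `c ≥ 0`, the unique root in `[0, 1)` of `a q² = c (1 - q)`. -/
noncomputable def quadRoot (a c : ℝ) : ℝ := (√(c ^ 2 + 4 * a * c) - c) / (2 * a)

section QuadRoot

variable {a c : ℝ}

@[simp]
lemma quadRoot_zero (a : ℝ) : quadRoot a 0 = 0 := by simp [quadRoot]

lemma quadRoot_pos (ha : 0 < a) (hc : 0 < c) : 0 < quadRoot a c := by
  refine div_pos ?_ (by positivity)
  rw [sub_pos, lt_sqrt hc.le]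
  nlinarith

lemma quadRoot_lt_one (ha : 0 < a) (hc : 0 ≤ c) : quadRoot a c < 1 := by
  rw [quadRoot, div_lt_one (by positivity), sub_lt_iff_lt_add, sqrt_lt' (by positivity)]
  nlinarith

lemma quadRoot_spec (ha : 0 < a) (hc : 0 ≤ c) :
    a * quadRoot a c ^ 2 = c * (1 - quadRoot a c) := by
  have hsq := sq_sqrt (show 0 ≤ c ^ 2 + 4 * a * c by positivity)
  have hq : 2 * a * quadRoot a c = √(c ^ 2 + 4 * a * c) - c := by
    rw [quadRoot]
    field_simp
  refine mul_left_cancel₀ (by positivity : 4 * a ≠ 0) ?_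
  linear_combination (2 * a * quadRoot a c + √(c ^ 2 + 4 * a * c) + c) * hq + hsq

lemma quadRoot_unique (ha : 0 < a) (hc : 0 < c) {q : ℝ} (hq : 0 ≤ q)
    (h : a * q ^ 2 = c * (1 - q)) : quadRoot a c = q := by
  have hr := quadRoot_pos ha hc
  have hfactor : (quadRoot a c - q) * (a * (quadRoot a c + q) + c) = 0 := by
    linear_combination quadRoot_spec ha hc.le - h
  rcases mul_eq_zero.1 hfactor with h' | h'
  · linarith
  · nlinarith

lemma continuous_quadRoot (a : ℝ) : Continuous (quadRoot a) := by
  unfold quadRoot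
  fun_prop

lemma hasDerivAt_quadRoot (ha : 0 < a) (hc : 0 < c) :
    HasDerivAt (quadRoot a) ((1 - quadRoot a c) / (2 * a * quadRoot a c + c)) c := by
  have hdisc : 0 < c ^ 2 + 4 * a * c := by positivity
  have hsqrt : HasDerivAt (fun x => √(x ^ 2 + 4 * a * x))
      ((2 * c + 4 * a) / (2 * √(c ^ 2 + 4 * a * c))) c := by
    have := ((hasDerivAt_pow 2 c).add ((hasDerivAt_id c).const_mul (4 * a))).sqrt hdisc.ne'
    convert this using 1 <;> simp
  refine ((hsqrt.sub (hasDerivAt_id c)).div_const (2 * a)).congr_deriv ?_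
  rw [quadRoot, mul_div_cancel₀ _ (by positivity : 2 * a ≠ 0), sub_add_cancel]
  field_simp
  ring

lemma quadRoot_strictMonoOn (ha : 0 < a) : StrictMonoOn (quadRoot a) (Ici 0) := by
  refine strictMonoOn_of_deriv_pos (convex_Ici 0) (continuous_quadRoot a).continuousOn ?_
  intro c hc
  rw [interior_Ici, mem_Ioi] at hc
  have h1 := quadRoot_lt_one ha hc.le
  have h0 := quadRoot_pos ha hc
  rw [(hasDerivAt_quadRoot ha hc).deriv]
  exact div_pos (by linarith) (by nlinarith)

end QuadRoot

section System

variable {ι : Type*} (lam p : ι → ℝ)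

noncomputable def candidate (c : ℝ) (s : ι) : ℝ := quadRoot (lam s / p s) c

variable {lam p}

lemma candidate_mem_Ioo (hlam : ∀ s, 0 < lam s) (hp : ∀ s, 0 < p s) {c : ℝ} (hc : 0 < c)
    (s : ι) : candidate lam p c s ∈ Ioo 0 1 :=
  ⟨quadRoot_pos (div_pos (hlam s) (hp s)) hc, quadRoot_lt_one (div_pos (hlam s) (hp s)) hc.le⟩

lemma candidate_spec (hlam : ∀ s, 0 < lam s) (hp : ∀ s, 0 < p s) {c : ℝ} (hc : 0 ≤ c)
    (s : ι) : lam s / p s * candidate lam p c s ^ 2 = c * (1 - candidate lam p c s) :=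
  quadRoot_spec (div_pos (hlam s) (hp s)) hc

variable [Fintype ι] (lam p)

noncomputable def V (q : ι → ℝ) : ℝ := -∑ t, lam t * log (1 - q t)

noncomputable def U (q : ι → ℝ) : ℝ := 1 + ∑ t, p t * (1 - q t) / q t

def IsSolution (q : ι → ℝ) : Prop :=
  (∀ s, q s ∈ Ioo 0 1) ∧ ∀ s, lam s / p s * q s ^ 2 / (1 - q s) = V lam q / U p q

noncomputable def defect (c : ℝ) : ℝ :=
  c + ∑ s, lam s * (candidate lam p c s + log (1 - candidate lam p c s))

noncomputable def defectDeriv (c : ℝ) : ℝ :=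
  1 - ∑ s, p s * (1 - candidate lam p c s) / (2 - candidate lam p c s)

variable {lam p}

lemma U_pos (hp : ∀ s, 0 ≤ p s) {q : ι → ℝ} (hq : ∀ s, q s ∈ Ioo 0 1) : 0 < U p q := by
  have hterm (s : ι) : 0 ≤ p s * (1 - q s) / q s :=
    div_nonneg (mul_nonneg (hp s) (sub_pos.2 (hq s).2).le) (hq s).1.le
  have := Finset.sum_nonneg fun s (_ : s ∈ Finset.univ) => hterm s
  rw [U]
  linarith

lemma defect_zero : defect lam p 0 = 0 := by
  simp [defect, candidate]

lemma exists_defectDeriv_neg (hP : 2 < ∑ s, p s) : ∃ c, 0 < c ∧ defectDeriv lam p c < 0 := by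
  have hcont : ContinuousAt (defectDeriv lam p) 0 := by
    unfold defectDeriv candidate
    have := continuous_quadRoot
    fun_prop (disch := simp)
  have h0 : defectDeriv lam p 0 < 0 := by
    simp only [defectDeriv, candidate, quadRoot_zero, sub_zero, mul_one, ← Finset.sum_div]
    linarith
  obtain ⟨c, hneg, hc⟩ := (((hcont.tendsto.mono_left nhdsWithin_le_nhds).eventually
    (gt_mem_nhds h0)).and (self_mem_nhdsWithin (s := Ioi 0))).exists
  exact ⟨c, hc, hneg⟩

variable (hlam : ∀ s, 0 < lam s) (hp : ∀ s, 0 < p s)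
include hlam hp

lemma defect_eq {c : ℝ} (hc : 0 < c) :
    defect lam p c = c * U p (candidate lam p c) - V lam (candidate lam p c) := by
  have hterm (s : ι) : c * (p s * (1 - candidate lam p c s) / candidate lam p c s) =
      lam s * candidate lam p c s := by
    have hspec := candidate_spec hlam hp hc.le s
    have hq := (candidate_mem_Ioo hlam hp hc s).1
    have hps := (hp s).ne'
    field_simp at hspec ⊢
    linear_combination -hspec
  simp only [defect, U, V, mul_add, Finset.mul_sum, hterm, Finset.sum_add_distrib]
  ring

lemma continuousOn_defect : ContinuousOn (defect lam p) (Ici 0) := by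
  refine continuousOn_id.add (continuousOn_finsetSum _ fun s _ => ?_)
  have hq := (continuous_quadRoot (lam s / p s)).continuousOn (s := Ici 0)
  refine continuousOn_const.mul (hq.add ((continuousOn_const.sub hq).log fun c hc => ?_))
  exact (sub_pos.2 (quadRoot_lt_one (div_pos (hlam s) (hp s)) hc)).ne'

lemma hasDerivAt_defect {c : ℝ} (hc : 0 < c) :
    HasDerivAt (defect lam p) (defectDeriv lam p c) c := by
  have hterm (s : ι) :
      HasDerivAt (fun c => lam s * (candidate lam p c s + log (1 - candidate lam p c s)))
        (-(p s * (1 - candidate lam p c s) / (2 - candidate lam p c s))) c := by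
    have hQ := hasDerivAt_quadRoot (div_pos (hlam s) (hp s)) hc
    have hspec := candidate_spec hlam hp hc.le s
    obtain ⟨hq0, hq1⟩ := candidate_mem_Ioo hlam hp hc s
    unfold candidate at hq0 hq1 hspec ⊢
    refine ((hQ.add ((hQ.const_sub 1).log (by linarith))).const_mul (lam s)).congr_deriv ?_
    set q := quadRoot (lam s / p s) c
    have := hlam s
    have := hp s
    have : 1 - q ≠ 0 := by linarith
    have : 2 - q ≠ 0 := by linarith
    field_simp at hspec ⊢
    linear_combination -hspec
  have := (hasDerivAt_id c).add (HasDerivAt.fun_sum (u := Finset.univ) fun s _ => hterm s)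
  rwa [Finset.sum_neg_distrib, ← sub_eq_add_neg] at this

lemma strictMonoOn_defectDeriv [Nonempty ι] : StrictMonoOn (defectDeriv lam p) (Ioi 0) := by
  intro x hx y hy hxy
  refine sub_lt_sub_left (Finset.sum_lt_sum_of_nonempty Finset.univ_nonempty fun s _ => ?_) 1
  have hlt := quadRoot_strictMonoOn (div_pos (hlam s) (hp s))
    (mem_Ici.2 (le_of_lt hx)) (mem_Ici.2 (le_of_lt hy)) hxy
  have hy1 := (candidate_mem_Ioo hlam hp hy s).2
  have := hp s
  unfold candidate at hy1 ⊢
  rw [div_lt_div_iff₀ (by linarith) (by linarith)]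
  nlinarith

lemma exists_defectDeriv_pos : ∃ c, 0 < c ∧ 0 < defectDeriv lam p c := by
  set c := 1 + ∑ s, lam s
  have hc : 0 < c := by
    have := Finset.sum_nonneg fun s (_ : s ∈ Finset.univ) => (hlam s).le
    linarith
  -- `c p(s) (1 - q_s) = λ(s) q_s² ≤ λ(s)`
  have hterm (s : ι) :
      p s * (1 - candidate lam p c s) / (2 - candidate lam p c s) ≤ lam s / c := by
    obtain ⟨hq0, hq1⟩ := candidate_mem_Ioo hlam hp hc s
    have hspec := candidate_spec hlam hp hc.le s
    have := hp s
    field_simp at hspec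
    rw [div_le_div_iff₀ (by linarith) hc]
    have h2q : 0 < 2 + candidate lam p c s := by linarith
    nlinarith [mul_pos (hlam s) (mul_pos (sub_pos.2 hq1) h2q)]
  refine ⟨c, hc, ?_⟩
  have := Finset.sum_le_sum fun s (_ : s ∈ Finset.univ) => hterm s
  rw [← Finset.sum_div] at this
  have hlt : (∑ s, lam s) / c < 1 := (div_lt_one hc).2 (lt_one_add _)
  rw [defectDeriv]
  linarith

lemma isSolution_iff [Nonempty ι] {q : ι → ℝ} :
    IsSolution lam p q ↔ ∃ c, 0 < c ∧ defect lam p c = 0 ∧ q = candidate lam p c := by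
  constructor
  · rintro ⟨hq, hsol⟩
    set c := V lam q / U p q
    have hU := U_pos (fun s => (hp s).le) hq
    have hc : 0 < c := by
      obtain ⟨s⟩ := ‹Nonempty ι›
      obtain ⟨hq0, hq1⟩ := hq s
      have := hlam s
      have := hp s
      have : 0 < 1 - q s := sub_pos.2 hq1
      rw [← hsol s]
      positivity
    have hcand : q = candidate lam p c := funext fun s => by
      refine (quadRoot_unique (div_pos (hlam s) (hp s)) hc (hq s).1.le ?_).symm
      rw [← hsol s, div_mul_cancel₀ _ (sub_pos.2 (hq s).2).ne']
    refine ⟨c, hc, ?_, hcand⟩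
    rw [defect_eq hlam hp hc, ← hcand, div_mul_cancel₀ _ hU.ne', sub_self]
  · rintro ⟨c, hc, hD, rfl⟩
    have hq := candidate_mem_Ioo hlam hp hc
    have hΦ : V lam (candidate lam p c) / U p (candidate lam p c) = c := by
      rw [defect_eq hlam hp hc, sub_eq_zero] at hD
      rw [← hD, mul_div_cancel_right₀ _ (U_pos (fun s => (hp s).le) hq).ne']
    refine ⟨hq, fun s => ?_⟩
    rw [hΦ, div_eq_iff (sub_pos.2 (hq s).2).ne']
    exact candidate_spec hlam hp hc.le s

theorem existsUnique_isSolution [Nonempty ι] (hP : 2 < ∑ s, p s) :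
    ∃! q, IsSolution lam p q := by
  obtain ⟨c, ⟨hc, hD⟩, huniq⟩ := existsUnique_pos_eq_zero_of_strictMonoOn_deriv
    (continuousOn_defect hlam hp) (fun c hc => hasDerivAt_defect hlam hp hc)
    (strictMonoOn_defectDeriv hlam hp) defect_zero (exists_defectDeriv_neg hP)
    (exists_defectDeriv_pos hlam hp)
  refine ⟨candidate lam p c, (isSolution_iff hlam hp).2 ⟨c, hc, hD, rfl⟩, fun q hq => ?_⟩
  obtain ⟨c', hc', hD', rfl⟩ := (isSolution_iff hlam hp).1 hq
  rw [huniq c' ⟨hc', hD'⟩]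

end System

end PhiSystem

/-- If ∑ p(s) ≥ 3, then the system of equations (λ(s)/p(s))·q(s)²/(1−q(s)) = Φ(q)
for all s ∈ S has exactly one solution q ∈ (0,1)^S, where
Φ(q) = (−∑ λ(t)·log(1−q(t))) / (1 + ∑ p(t)·(1−q(t))/q(t)). -/
theorem exactly_one_solution
    {S : Type*} [Fintype S] [Nonempty S]
    (lam : S → ℝ) (p : S → ℕ)
    (hlam : ∀ s, lam s ∈ Set.Ioo (0:ℝ) 1) (hp : ∀ s, 1 ≤ p s)
    (hP : 3 ≤ ∑ s, p s) :
    ∃! q : S → ℝ, (∀ s, q s ∈ Set.Ioo (0:ℝ) 1) ∧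
      ∀ s, lam s / (p s : ℝ) * (q s) ^ 2 / (1 - q s) =
        (-∑ t, lam t * Real.log (1 - q t)) /
          (1 + ∑ t, (p t : ℝ) * (1 - q t) / q t) := by
  have hP' : (3 : ℝ) ≤ ∑ s, (p s : ℝ) := by exact_mod_cast hP
  exact PhiSystem.existsUnique_isSolution (fun s => (hlam s).1) (fun s => Nat.cast_pos.2 (hp s))
    (by linarith)
end

section
/- The function g(z) = z + ∑_{t∈S} λ(t)·q_z(t) + ∑_{t∈S} λ(t)·log(1−q_z(t)) (extended to z = 0 by q_0 = 0, so g(0) = 0) is strictly convex on [0,∞), and for every z > 0 its derivative equals g'(z) = 1 − ∑_{t∈S} p(t)·(1−q_z(t))/(2−q_z(t)). -/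
/-!
With `c = λ/p`, the defining equation of `q_z` reads `c q² = z (1 - q)`, whose root in `[0, 1)` is
`q_z = (√(z² + 4cz) - z) / (2c)`; this closed form is continuous on `[0, ∞)` and vanishes at `0`.
Being the inverse of `x ↦ c x² / (1 - x)`, it has derivative `(1 - q)² / (c q (2 - q)) > 0`,
and differentiating `λ q + λ log (1 - q)` gives `-p (1 - q) / (2 - q)`. As `q_z` increases with `z`
and `x ↦ (1 - x) / (2 - x)` decreases, `g'` is strictly increasing, so `g` is strictly convex.
-/

open Real Set

/-- The root in `[0, 1)` of `c x² = z (1 - x)` for `c > 0`, `z ≥ 0`. -/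
noncomputable def quadRoot (c z : ℝ) : ℝ := (√(z ^ 2 + 4 * c * z) - z) / (2 * c)

section quadRoot

variable {c z : ℝ}

@[simp]
lemma quadRoot_zero (c : ℝ) : quadRoot c 0 = 0 := by simp [quadRoot]

@[fun_prop]
lemma continuous_quadRoot (c : ℝ) : Continuous (quadRoot c) := by
  unfold quadRoot; fun_prop

lemma quadRoot_pos (hc : 0 < c) (hz : 0 < z) : 0 < quadRoot c z := by
  unfold quadRoot
  refine div_pos ?_ (by positivity)
  rw [sub_pos, lt_sqrt hz.le]
  nlinarith

lemma quadRoot_lt_one (hc : 0 < c) (hz : 0 ≤ z) : quadRoot c z < 1 := by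
  unfold quadRoot
  rw [div_lt_one (by positivity), sub_lt_iff_lt_add, sqrt_lt' (by positivity)]
  nlinarith

lemma quadRoot_spec (hc : 0 < c) (hz : 0 ≤ z) :
    c * quadRoot c z ^ 2 = z * (1 - quadRoot c z) := by
  have hs := sq_sqrt (show 0 ≤ z ^ 2 + 4 * c * z by positivity)
  unfold quadRoot
  generalize √(z ^ 2 + 4 * c * z) = s at hs ⊢
  field_simp
  linear_combination hs

lemma quadRoot_eq {x : ℝ} (hc : 0 < c) (hx : x ∈ Ioo 0 1) (h : c * x ^ 2 / (1 - x) = z) :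
    quadRoot c z = x := by
  have hx1 : 1 - x ≠ 0 := (sub_pos.2 hx.2).ne'
  rw [div_eq_iff hx1] at h
  have hz : 0 ≤ z := by nlinarith [hx.1, hx.2]
  have hs : √(z ^ 2 + 4 * c * z) = 2 * c * x + z := by
    rw [show z ^ 2 + 4 * c * z = (2 * c * x + z) ^ 2 by linear_combination (-4 * c) * h,
      sqrt_sq (by nlinarith [hx.1])]
  rw [quadRoot, hs]
  field_simp
  ring

lemma hasDerivAt_quadRoot (hc : 0 < c) (hz : 0 < z) :
    HasDerivAt (quadRoot c)
      ((c * quadRoot c z * (2 - quadRoot c z) / (1 - quadRoot c z) ^ 2)⁻¹) z := by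
  set r := quadRoot c z
  have hr0 : 0 < r := quadRoot_pos hc hz
  have hr1 : 1 - r ≠ 0 := (sub_pos.2 (quadRoot_lt_one hc hz.le)).ne'
  have hr2 : 0 < 2 - r := by linarith [quadRoot_lt_one hc hz.le]
  have hf : HasDerivAt (fun x => c * x ^ 2 / (1 - x)) (c * r * (2 - r) / (1 - r) ^ 2) r := by
    refine (((hasDerivAt_pow 2 r).const_mul c).fun_div ((hasDerivAt_id' r).const_sub 1)
      hr1).congr_deriv ?_
    field_simp
    ring
  refine hf.of_local_left_inverse (continuous_quadRoot c).continuousAt (by positivity) ?_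
  filter_upwards [Ioi_mem_nhds hz] with y hy
  rw [div_eq_iff (sub_pos.2 (quadRoot_lt_one hc hy.le)).ne', quadRoot_spec hc hy.le]

lemma strictMonoOn_quadRoot (hc : 0 < c) : StrictMonoOn (quadRoot c) (Ici 0) := by
  refine strictMonoOn_of_deriv_pos (convex_Ici 0) (continuous_quadRoot c).continuousOn
    fun z hz => ?_
  rw [interior_Ici] at hz
  have hr1 := quadRoot_lt_one hc hz.le
  rw [(hasDerivAt_quadRoot hc hz).deriv]
  exact inv_pos.2 (div_pos (mul_pos (mul_pos hc (quadRoot_pos hc hz)) (by linarith))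
    (pow_pos (sub_pos.2 hr1) 2))

lemma hasDerivAt_mul_quadRoot_add_mul_log (a : ℝ) (hc : 0 < c) (hz : 0 < z) :
    HasDerivAt (fun x => a * quadRoot c x + a * log (1 - quadRoot c x))
      (-(a / c) * ((1 - quadRoot c z) / (2 - quadRoot c z))) z := by
  have hr := hasDerivAt_quadRoot hc hz
  have hr0 : quadRoot c z ≠ 0 := (quadRoot_pos hc hz).ne'
  have hr1 : 1 - quadRoot c z ≠ 0 := (sub_pos.2 (quadRoot_lt_one hc hz.le)).ne'
  have hr2 : 2 - quadRoot c z ≠ 0 := by linarith [quadRoot_lt_one hc hz.le]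
  refine ((hr.const_mul a).add ((hr.const_sub 1).log hr1 |>.const_mul a)).congr_deriv ?_
  field_simp
  ring

end quadRoot

lemma strictAntiOn_one_sub_div_two_sub :
    StrictAntiOn (fun x : ℝ => (1 - x) / (2 - x)) (Iio 2) := by
  intro x hx y hy hxy
  rw [mem_Iio] at hx hy
  rw [div_lt_div_iff₀ (sub_pos.2 hy) (sub_pos.2 hx)]
  nlinarith

section potential

variable {S : Type*} [Fintype S]

/-- `g` written through the closed form of `q_z`, with `c t = λ t / p t`. -/
noncomputable def quadRootPotential (a c : S → ℝ) (z : ℝ) : ℝ :=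
  z + ∑ t, (a t * quadRoot (c t) z + a t * log (1 - quadRoot (c t) z))

variable (a : S → ℝ) {c : S → ℝ}

lemma hasDerivAt_quadRootPotential (hc : ∀ t, 0 < c t) {z : ℝ} (hz : 0 < z) :
    HasDerivAt (quadRootPotential a c)
      (1 - ∑ t, a t / c t * ((1 - quadRoot (c t) z) / (2 - quadRoot (c t) z))) z := by
  refine ((hasDerivAt_id' z).add (HasDerivAt.fun_sum fun t _ =>
    hasDerivAt_mul_quadRoot_add_mul_log (a t) (hc t) hz)).congr_deriv ?_
  simp only [neg_mul, Finset.sum_neg_distrib, sub_eq_add_neg]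

lemma continuousOn_quadRootPotential (hc : ∀ t, 0 < c t) :
    ContinuousOn (quadRootPotential a c) (Ici 0) := by
  unfold quadRootPotential
  fun_prop (disch := exact fun z hz => (sub_pos.2 (quadRoot_lt_one (hc _) hz)).ne')

lemma strictConvexOn_quadRootPotential [Nonempty S] (ha : ∀ t, 0 < a t) (hc : ∀ t, 0 < c t) :
    StrictConvexOn ℝ (Ici 0) (quadRootPotential a c) := by
  refine StrictMonoOn.strictConvexOn_of_deriv (convex_Ici 0)
    (continuousOn_quadRootPotential a hc) ?_
  rw [interior_Ici]
  intro x hx y hy hxy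
  rw [(hasDerivAt_quadRootPotential a hc hx).deriv, (hasDerivAt_quadRootPotential a hc hy).deriv]
  refine sub_lt_sub_left (Finset.sum_lt_sum_of_nonempty Finset.univ_nonempty fun t _ => ?_) 1
  have hlt (z : ℝ) (hz : 0 ≤ z) : quadRoot (c t) z ∈ Iio 2 := by
    have := quadRoot_lt_one (hc t) hz
    rw [mem_Iio]; linarith
  exact mul_lt_mul_of_pos_left (strictAntiOn_one_sub_div_two_sub (hlt x hx.le) (hlt y hy.le)
    (strictMonoOn_quadRoot (hc t) (mem_Ici.2 hx.le) (mem_Ici.2 hy.le) hxy)) (div_pos (ha t) (hc t))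

end potential

/-- The function g(z) = z + ∑ λ(t)·q_z(t) + ∑ λ(t)·log(1−q_z(t)) (extended to z = 0
by q_0 = 0, so g(0) = 0) is strictly convex on [0,∞), and for every z > 0 its
derivative equals 1 − ∑ p(t)·(1−q_z(t))/(2−q_z(t)); here, for z > 0, q_z(s) is the
unique x ∈ (0,1) with (λ(s)/p(s))·x²/(1−x) = z. -/
theorem g_strictConvex_and_deriv
    {S : Type*} [Fintype S] [Nonempty S]
    (lam : S → ℝ) (p : S → ℕ)
    (hlam : ∀ s, lam s ∈ Set.Ioo (0:ℝ) 1) (hp : ∀ s, 1 ≤ p s)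
    (qz : ℝ → S → ℝ)
    (hqz : ∀ z > (0:ℝ), ∀ s, qz z s ∈ Set.Ioo (0:ℝ) 1 ∧
      lam s / (p s : ℝ) * (qz z s) ^ 2 / (1 - qz z s) = z)
    (hqz0 : ∀ s, qz 0 s = 0)
    (g : ℝ → ℝ)
    (hg : ∀ z, g z = z + ∑ t, lam t * qz z t + ∑ t, lam t * Real.log (1 - qz z t)) :
    StrictConvexOn ℝ (Set.Ici 0) g ∧
      ∀ z > (0:ℝ), HasDerivAt g
        (1 - ∑ t, (p t : ℝ) * (1 - qz z t) / (2 - qz z t)) z := by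
  set c : S → ℝ := fun t => lam t / p t
  have hp0 (t : S) : (0 : ℝ) < p t := by exact_mod_cast hp t
  have hc (t : S) : 0 < c t := div_pos (hlam t).1 (hp0 t)
  have hq (z : ℝ) (hz : 0 ≤ z) (t : S) : qz z t = quadRoot (c t) z := by
    rcases hz.eq_or_lt with rfl | hz
    · rw [hqz0, quadRoot_zero]
    · exact (quadRoot_eq (hc t) (hqz z hz t).1 (hqz z hz t).2).symm
  have hgq : EqOn (quadRootPotential lam c) g (Ici 0) := fun z hz => by
    rw [hg, quadRootPotential, Finset.sum_add_distrib, add_assoc]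
    simp only [hq z hz]
  refine ⟨(strictConvexOn_quadRootPotential lam (fun t => (hlam t).1) hc).congr hgq,
    fun z hz => ?_⟩
  have hderiv := (hasDerivAt_quadRootPotential lam hc hz).congr_of_eventuallyEq
    (hgq.eventuallyEq_of_mem (Ici_mem_nhds hz)).symm
  refine hderiv.congr_deriv (congrArg (1 - ·) (Finset.sum_congr rfl fun t _ => ?_))
  rw [hq z hz.le, div_div_cancel₀ (hlam t).1.ne', mul_div_assoc]
end

section
/- The function Θ(y) = y + ∑_{t∈S} (p(t)/2)·(−y + √(y² + 4λ(t)/p(t))) is strictly convex on ℝ, and it is twice differentiable with second derivative Θ''(y) = ∑_{t∈S} 2λ(t)/(y² + 4λ(t)/p(t))^{3/2} > 0 for every y ∈ ℝ. -/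
/-!
Each summand `(p/2)(-y + √(y² + c))` with `c = 4λ/p > 0` is smooth, with first derivative
`(p/2)(-1 + y/√(y² + c))` and second derivative `(p/2)·c/(y² + c)^{3/2} = 2λ/(y² + c)^{3/2}`.
A sum of these over a nonempty index set is everywhere positive, so `Θ` is strictly convex.
-/

open Real Finset

theorem hasDerivAt_sqrt_sq_add {c : ℝ} (hc : 0 < c) (y : ℝ) :
    HasDerivAt (fun y => √(y ^ 2 + c)) (y / √(y ^ 2 + c)) y := by
  have hpos : 0 < y ^ 2 + c := by positivity
  refine ((hasDerivAt_pow 2 y).add_const c).sqrt hpos.ne' |>.congr_deriv ?_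
  field_simp
  norm_num

theorem hasDerivAt_div_sqrt_sq_add {c : ℝ} (hc : 0 < c) (y : ℝ) :
    HasDerivAt (fun y => y / √(y ^ 2 + c)) (c / (y ^ 2 + c) ^ ((3 : ℝ) / 2)) y := by
  have hpos : 0 < y ^ 2 + c := by positivity
  have hsqrt : 0 < √(y ^ 2 + c) := sqrt_pos.mpr hpos
  have hsq : √(y ^ 2 + c) ^ 2 = y ^ 2 + c := sq_sqrt hpos.le
  have hrpow : (y ^ 2 + c) ^ ((3 : ℝ) / 2) = (y ^ 2 + c) * √(y ^ 2 + c) := by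
    rw [show (3 : ℝ) / 2 = 1 + 1 / 2 by norm_num, rpow_add hpos, rpow_one, ← sqrt_eq_rpow]
  refine (hasDerivAt_id y).div (hasDerivAt_sqrt_sq_add hc y) hsqrt.ne' |>.congr_deriv ?_
  rw [hrpow, id_eq, hsq]
  field_simp
  nlinarith [hsq]

theorem sum_div_sq_add_rpow_pos {ι : Type*} [Fintype ι] [Nonempty ι] {b c : ι → ℝ}
    (hb : ∀ i, 0 < b i) (hc : ∀ i, 0 < c i) (y : ℝ) :
    0 < ∑ i, b i / (y ^ 2 + c i) ^ ((3 : ℝ) / 2) :=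
  sum_pos (fun i _ => div_pos (hb i) (rpow_pos_of_pos (by positivity [hc i]) _)) univ_nonempty

noncomputable def thetaFun {ι : Type*} [Fintype ι] (a c : ι → ℝ) (y : ℝ) : ℝ :=
  y + ∑ i, a i * (-y + √(y ^ 2 + c i))

section thetaFun

variable {ι : Type*} [Fintype ι] (a : ι → ℝ) {c : ι → ℝ} (hc : ∀ i, 0 < c i)
include hc

theorem hasDerivAt_thetaFun (y : ℝ) :
    HasDerivAt (thetaFun a c) (1 + ∑ i, a i * (-1 + y / √(y ^ 2 + c i))) y :=
  (hasDerivAt_id' y).add <| HasDerivAt.fun_sum fun i _ =>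
    ((hasDerivAt_neg y).add (hasDerivAt_sqrt_sq_add (hc i) y)).const_mul (a i)

theorem deriv_thetaFun :
    deriv (thetaFun a c) = fun y => 1 + ∑ i, a i * (-1 + y / √(y ^ 2 + c i)) :=
  funext fun y => (hasDerivAt_thetaFun a hc y).deriv

theorem hasDerivAt_deriv_thetaFun (y : ℝ) :
    HasDerivAt (deriv (thetaFun a c)) (∑ i, a i * c i / (y ^ 2 + c i) ^ ((3 : ℝ) / 2)) y := by
  rw [deriv_thetaFun a hc]
  refine (hasDerivAt_const y 1).add (HasDerivAt.fun_sum fun i _ =>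
    ((hasDerivAt_const y (-1)).add (hasDerivAt_div_sqrt_sq_add (hc i) y)).const_mul (a i))
    |>.congr_deriv ?_
  simp only [zero_add, mul_div_assoc]

theorem strictConvexOn_thetaFun [Nonempty ι] (ha : ∀ i, 0 < a i) :
    StrictConvexOn ℝ Set.univ (thetaFun a c) := by
  refine strictConvexOn_univ_of_deriv2_pos
    (continuous_iff_continuousAt.mpr fun y => (hasDerivAt_thetaFun a hc y).continuousAt)
    fun y => ?_
  rw [Function.iterate_succ_apply, Function.iterate_one,
    (hasDerivAt_deriv_thetaFun a hc y).deriv]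
  exact sum_div_sq_add_rpow_pos (fun i => mul_pos (ha i) (hc i)) hc y

end thetaFun

/-- Θ(y) = y + ∑ (p(t)/2)·(−y + √(y² + 4λ(t)/p(t))) is strictly convex on ℝ, and it
is twice differentiable with second derivative
Θ''(y) = ∑ 2λ(t)/(y² + 4λ(t)/p(t))^{3/2} > 0 for every y ∈ ℝ. -/
theorem Theta_strictConvex_and_second_deriv
    {S : Type*} [Fintype S] [Nonempty S]
    (lam : S → ℝ) (p : S → ℕ)
    (hlam : ∀ s, lam s ∈ Set.Ioo (0:ℝ) 1) (hp : ∀ s, 1 ≤ p s)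
    (Θ : ℝ → ℝ)
    (hΘ : ∀ y, Θ y = y + ∑ t, (p t : ℝ) / 2 *
      (-y + Real.sqrt (y ^ 2 + 4 * lam t / (p t : ℝ)))) :
    StrictConvexOn ℝ Set.univ Θ ∧
      ∀ y : ℝ,
        HasDerivAt (deriv Θ)
          (∑ t, 2 * lam t / (y ^ 2 + 4 * lam t / (p t : ℝ)) ^ ((3:ℝ)/2)) y ∧
        0 < ∑ t, 2 * lam t / (y ^ 2 + 4 * lam t / (p t : ℝ)) ^ ((3:ℝ)/2) := by
  have hp_pos : ∀ t, (0 : ℝ) < p t := fun t => by exact_mod_cast hp t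
  have hlam_pos : ∀ t, 0 < 2 * lam t := fun t => by linarith [(hlam t).1]
  have hc : ∀ t, 0 < 4 * lam t / (p t : ℝ) :=
    fun t => div_pos (by linarith [hlam_pos t]) (hp_pos t)
  have hac : ∀ t, (p t : ℝ) / 2 * (4 * lam t / p t) = 2 * lam t :=
    fun t => by field_simp [(hp_pos t).ne']; ring
  obtain rfl : Θ = thetaFun (fun t => (p t : ℝ) / 2) (fun t => 4 * lam t / p t) := funext hΘ
  refine ⟨strictConvexOn_thetaFun _ hc fun t => half_pos (hp_pos t), fun y => ⟨?_, ?_⟩⟩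
  · simpa only [hac] using hasDerivAt_deriv_thetaFun (fun t => (p t : ℝ) / 2) hc y
  · exact sum_div_sq_add_rpow_pos hlam_pos hc y
end

section
/- If ∑_{s∈S} p(s) ≥ 3, then there exists y₀ > 0 such that the function Υ(y) = y²·∏_{s∈S} (Γ(s)/y + 1)^{p(s)} is strictly decreasing on (0,y₀] and strictly increasing on [y₀,∞); moreover Υ(y) → ∞ as y → 0⁺ and Υ(y) → ∞ as y → ∞. -/
/-!
Pass to `L = log Υ = 2 log y + ∑ p(s) log (Γ(s)/y + 1)`. Its elasticity
`y L'(y) = 2 - ∑ p(s) Γ(s)/(Γ(s) + y)` increases strictly from `2 - ∑ p(s) < 0` at `y = 0`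
to the limit `2` at infinity, so it has exactly one zero `y₀`, before which `L` decreases
and after which it increases. Near `0`, `L = (2 - ∑ p(s)) log y + O(1) → ∞`, and at infinity
`L = 2 log y + o(1) → ∞`.
-/

open Filter Set Real Topology

section

variable {ι : Type*} [Fintype ι] (a : ℝ) (w Γ : ι → ℝ)

noncomputable def logUpsilon (y : ℝ) : ℝ :=
  a * log y + ∑ s, w s * log (Γ s / y + 1)

/-- `y * (logUpsilon a w Γ)' y` for `y > 0`. -/
noncomputable def upsilonElasticity (y : ℝ) : ℝ :=
  a - ∑ s, w s * (Γ s / (Γ s + y))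

variable {a w Γ}

lemma logUpsilon_eq (hΓ : ∀ s, 0 ≤ Γ s) {y : ℝ} (hy : 0 < y) :
    logUpsilon a w Γ y = (a - ∑ s, w s) * log y + ∑ s, w s * log (Γ s + y) := by
  have hterm : ∀ s, w s * log (Γ s / y + 1) = w s * log (Γ s + y) - w s * log y := fun s => by
    rw [div_add_one hy.ne', log_div (by linarith [hΓ s]) hy.ne', mul_sub]
  simp only [logUpsilon, hterm, Finset.sum_sub_distrib, ← Finset.sum_mul]
  ring

lemma hasDerivAt_logUpsilon (hΓ : ∀ s, 0 ≤ Γ s) {y : ℝ} (hy : 0 < y) :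
    HasDerivAt (logUpsilon a w Γ) (upsilonElasticity a w Γ y / y) y := by
  have hΓy : ∀ s, Γ s + y ≠ 0 := fun s => by linarith [hΓ s]
  have hsplit : HasDerivAt (fun y => (a - ∑ s, w s) * log y + ∑ s, w s * log (Γ s + y))
      ((a - ∑ s, w s) * y⁻¹ + ∑ s, w s * (Γ s + y)⁻¹) y :=
    ((hasDerivAt_log hy.ne').const_mul _).add <| HasDerivAt.fun_sum fun s _ =>
      (((hasDerivAt_id y).const_add (Γ s)).log (hΓy s)).const_mul (w s) |>.congr_deriv
        (by simp [div_eq_mul_inv])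
  refine (hsplit.congr_of_eventuallyEq ?_).congr_deriv ?_
  · filter_upwards [lt_mem_nhds hy] with z hz using logUpsilon_eq hΓ hz
  · simp only [upsilonElasticity, sub_mul, div_eq_mul_inv, Finset.sum_mul]
    rw [sub_add_eq_add_sub, sub_eq_sub_iff_add_eq_add, add_assoc, ← Finset.sum_add_distrib]
    refine congrArg _ (Finset.sum_congr rfl fun s _ => ?_)
    field_simp [hΓy s, hy.ne']
    ring

lemma strictMonoOn_upsilonElasticity (hw : ∀ s, 0 ≤ w s) (hw₀ : ∃ s, 0 < w s)
    (hΓ : ∀ s, 0 < Γ s) : StrictMonoOn (upsilonElasticity a w Γ) (Ici 0) := by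
  intro x (hx : 0 ≤ x) y _ hxy
  have hfrac : ∀ s, Γ s / (Γ s + y) < Γ s / (Γ s + x) := fun s =>
    div_lt_div_of_pos_left (hΓ s) (by linarith [hΓ s]) (by linarith)
  refine sub_lt_sub_left (Finset.sum_lt_sum (fun s _ => ?_) ?_) a
  · exact mul_le_mul_of_nonneg_left (hfrac s).le (hw s)
  · obtain ⟨s, hs⟩ := hw₀
    exact ⟨s, Finset.mem_univ s, mul_lt_mul_of_pos_left (hfrac s) hs⟩

lemma continuousOn_upsilonElasticity (hΓ : ∀ s, 0 < Γ s) :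
    ContinuousOn (upsilonElasticity a w Γ) (Ici 0) :=
  continuousOn_const.sub <| continuousOn_finsetSum _ fun s _ =>
    continuousOn_const.mul <| continuousOn_const.div (by fun_prop) fun y (hy : 0 ≤ y) => by
      linarith [hΓ s]

lemma upsilonElasticity_zero (hΓ : ∀ s, 0 < Γ s) :
    upsilonElasticity a w Γ 0 = a - ∑ s, w s := by
  simp [upsilonElasticity, (hΓ _).ne']

lemma tendsto_upsilonElasticity_atTop :
    Tendsto (upsilonElasticity a w Γ) atTop (𝓝 a) := by
  have hfrac : ∀ s, Tendsto (fun y => Γ s / (Γ s + y)) atTop (𝓝 0) := fun s =>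
    tendsto_const_nhds.div_atTop (tendsto_atTop_add_const_left _ _ tendsto_id)
  have h := (tendsto_const_nhds (x := a)).sub
    (tendsto_finsetSum Finset.univ fun s _ => (hfrac s).const_mul (w s))
  rwa [Finset.sum_eq_zero fun s _ => mul_zero (w s), sub_zero] at h

lemma exists_upsilonElasticity_eq_zero (ha : 0 < a) (haw : a < ∑ s, w s)
    (hΓ : ∀ s, 0 < Γ s) : ∃ y₀ > 0, upsilonElasticity a w Γ y₀ = 0 := by
  obtain ⟨b, hb_pos, hb⟩ := ((tendsto_upsilonElasticity_atTop (w := w) (Γ := Γ)).eventually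
    (lt_mem_nhds ha) |>.and (eventually_gt_atTop 0)).exists
  have h0 : upsilonElasticity a w Γ 0 < 0 := by rw [upsilonElasticity_zero hΓ]; linarith
  obtain ⟨y₀, hy₀, hzero⟩ := intermediate_value_Ioo hb.le
    ((continuousOn_upsilonElasticity hΓ).mono Icc_subset_Ici_self) ⟨h0, hb_pos⟩
  exact ⟨y₀, hy₀.1, hzero⟩

lemma exists_strictAntiOn_strictMonoOn_logUpsilon (ha : 0 < a) (haw : a < ∑ s, w s)
    (hw : ∀ s, 0 ≤ w s) (hΓ : ∀ s, 0 < Γ s) :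
    ∃ y₀ > 0, StrictAntiOn (logUpsilon a w Γ) (Ioc 0 y₀) ∧
      StrictMonoOn (logUpsilon a w Γ) (Ici y₀) := by
  obtain ⟨y₀, hy₀, hzero⟩ := exists_upsilonElasticity_eq_zero ha haw hΓ
  have hw₀ : ∃ s, 0 < w s := by
    simpa using Finset.exists_lt_of_sum_lt (f := fun _ => 0) (s := Finset.univ)
      (by simpa using ha.trans haw)
  have hmono := strictMonoOn_upsilonElasticity (a := a) hw hw₀ hΓ
  have hderiv : ∀ y, 0 < y →
      HasDerivAt (logUpsilon a w Γ) (upsilonElasticity a w Γ y / y) y :=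
    fun y hy => hasDerivAt_logUpsilon (fun s => (hΓ s).le) hy
  refine ⟨y₀, hy₀, strictAntiOn_of_deriv_neg (convex_Ioc 0 y₀) ?_ ?_,
    strictMonoOn_of_deriv_pos (convex_Ici y₀) ?_ ?_⟩
  · exact fun y hy => (hderiv y hy.1).continuousAt.continuousWithinAt
  · rw [interior_Ioc]
    rintro y ⟨hy, hyy₀⟩
    rw [(hderiv y hy).deriv]
    exact div_neg_of_neg_of_pos (hzero ▸ hmono hy.le hy₀.le hyy₀) hy
  · exact fun y hy => (hderiv y (hy₀.trans_le hy)).continuousAt.continuousWithinAt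
  · rw [interior_Ici]
    intro y (hy : y₀ < y)
    rw [(hderiv y (hy₀.trans hy)).deriv]
    exact div_pos (hzero ▸ hmono hy₀.le (hy₀.trans hy).le hy) (hy₀.trans hy)

lemma tendsto_logUpsilon_nhdsGT_zero (haw : a < ∑ s, w s) (hΓ : ∀ s, 0 < Γ s) :
    Tendsto (logUpsilon a w Γ) (𝓝[>] 0) atTop := by
  have hlog : Tendsto (fun y => (a - ∑ s, w s) * log y) (𝓝[>] 0) atTop :=
    tendsto_log_nhdsGT_zero.const_mul_atBot_of_neg (by linarith)
  have hrest : ContinuousAt (fun y => ∑ s, w s * log (Γ s + y)) 0 := by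
    fun_prop (disch := simp [(hΓ _).ne'])
  exact (hlog.atTop_add (hrest.tendsto.mono_left nhdsWithin_le_nhds)).congr'
    (eventually_nhdsWithin_of_forall fun y hy => (logUpsilon_eq (fun s => (hΓ s).le) hy).symm)

lemma tendsto_logUpsilon_atTop (ha : 0 < a) : Tendsto (logUpsilon a w Γ) atTop atTop := by
  have hlog : ∀ s, Tendsto (fun y => log (Γ s / y + 1)) atTop (𝓝 0) := fun s => by
    have h := ((tendsto_const_nhds (x := Γ s)).div_atTop tendsto_id).add_const (1 : ℝ)
    rw [zero_add] at h
    simpa [Function.comp_def] using (continuousAt_log one_ne_zero).tendsto.comp h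
  have hrest : Tendsto (fun y => ∑ s, w s * log (Γ s / y + 1)) atTop (𝓝 0) := by
    simpa using tendsto_finsetSum Finset.univ fun s _ => (hlog s).const_mul (w s)
  exact (tendsto_log_atTop.const_mul_atTop ha).atTop_add hrest

lemma pow_mul_prod_eq_exp_logUpsilon (n : ℕ) (p : ι → ℕ) (hΓ : ∀ s, 0 ≤ Γ s) {y : ℝ}
    (hy : 0 < y) :
    y ^ n * ∏ s, (Γ s / y + 1) ^ p s = exp (logUpsilon n (fun s => (p s : ℝ)) Γ y) := by
  have hpos : ∀ s, 0 < Γ s / y + 1 := fun s => by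
    linarith [div_nonneg (hΓ s) hy.le]
  simp only [logUpsilon, exp_add, exp_sum, ← log_pow, exp_log (pow_pos hy _),
    exp_log (pow_pos (hpos _) _)]

end

theorem Upsilon_shape_general
    {S : Type*} [Fintype S]
    (p : S → ℕ) (hP : 3 ≤ ∑ s, p s)
    (Γ : S → ℝ) (hΓ : ∀ s, 0 < Γ s)
    (Υ : ℝ → ℝ)
    (hΥ : ∀ y, Υ y = y ^ 2 * ∏ s, (Γ s / y + 1) ^ (p s)) :
    ∃ y₀ > (0:ℝ),
      StrictAntiOn Υ (Set.Ioc 0 y₀) ∧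
      StrictMonoOn Υ (Set.Ici y₀) ∧
      Tendsto Υ (nhdsWithin 0 (Set.Ioi 0)) atTop ∧
      Tendsto Υ atTop atTop := by
  set L := logUpsilon 2 (fun s => (p s : ℝ)) Γ
  have hΥL : EqOn (exp ∘ L) Υ (Ioi 0) := fun y hy => by
    rw [hΥ]
    exact_mod_cast (pow_mul_prod_eq_exp_logUpsilon 2 p (fun s => (hΓ s).le) hy).symm
  have hP' : (2 : ℝ) < ∑ s, (p s : ℝ) := by exact_mod_cast hP
  obtain ⟨y₀, hy₀, hanti, hmono⟩ :=
    exists_strictAntiOn_strictMonoOn_logUpsilon two_pos hP' (fun s => (p s).cast_nonneg) hΓ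
  refine ⟨y₀, hy₀, ?_, ?_, ?_, ?_⟩
  · exact (exp_strictMono.comp_strictAntiOn hanti).congr (hΥL.mono Ioc_subset_Ioi_self)
  · exact (exp_strictMono.comp_strictMonoOn hmono).congr (hΥL.mono (Ici_subset_Ioi.2 hy₀))
  · exact (tendsto_exp_atTop.comp (tendsto_logUpsilon_nhdsGT_zero hP' hΓ)).congr'
      (eventually_nhdsWithin_of_forall hΥL)
  · exact (tendsto_exp_atTop.comp (tendsto_logUpsilon_atTop two_pos)).congr'
      (eventually_atTop.2 ⟨1, fun y hy => hΥL (zero_lt_one.trans_le hy)⟩)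

/-- If ∑ p(s) ≥ 3, then there is y₀ > 0 such that Υ(y) = y²·∏ (Γ(s)/y + 1)^{p(s)}
strictly decreases on (0,y₀], strictly increases on [y₀,∞), and Υ(y) → ∞ both as
y → 0⁺ and as y → ∞. -/
theorem Upsilon_shape
    {S : Type*} [Fintype S] [Nonempty S]
    (p : S → ℕ) (hp : ∀ s, 1 ≤ p s) (hP : 3 ≤ ∑ s, p s)
    (Γ : S → ℝ) (hΓ : ∀ s, 0 < Γ s)
    (Υ : ℝ → ℝ)
    (hΥ : ∀ y, Υ y = y ^ 2 * ∏ s, (Γ s / y + 1) ^ (p s)) :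
    ∃ y₀ > (0:ℝ),
      StrictAntiOn Υ (Set.Ioc 0 y₀) ∧
      StrictMonoOn Υ (Set.Ici y₀) ∧
      Tendsto Υ (nhdsWithin 0 (Set.Ioi 0)) atTop ∧
      Tendsto Υ atTop atTop :=
  Upsilon_shape_general p hP Γ hΓ Υ hΥ
end

section
/- Suppose β > 0, E > 0 and q ∈ (0,1)^S satisfy, for every s ∈ S, the equation λ(s)/(1−q(s)) + β²ξ(q)·(−p(s)·(1−q(s))/q(s)² + (p(s)/q(s))·∑_{t∈S} p(t)·(1−q(t))/q(t)) = βE√(ξ(q))·p(s)/q(s), together with the two equalities β²ξ(q)·(1 + ∑_{t∈S} p(t)·(1−q(t))/q(t)) = −∑_{t∈S} λ(t)·log(1−q(t)) = βE√(ξ(q)). Then: (i) for every s ∈ S, (λ(s)/p(s))·q(s)²/(1−q(s)) = Φ(q); (ii) β² = Φ(q)/ξ(q); and (iii) E = √(V(q)·U(q)). -/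
/-!
Substituting the equalities (II) into (I), the right-hand side of (I) becomes
`β²ξ·U·p(s)/q(s)` and the sums cancel, leaving `λ(s)/(1 - q(s)) = β²ξ·p(s)/q(s)²`.
Since `β²ξ = V/U = Φ` by the first equality of (II), this gives (i) and (ii); squaring the
second equality gives `V² = β²E²ξ = V·E²/U`, i.e. (iii).
-/

lemma div_mul_sq_div_eq_of_stationary {l q c P A : ℝ} (hq : q ≠ 0) (hq₁ : 1 - q ≠ 0)
    (hP : P ≠ 0)
    (h : l / (1 - q) + c * (-P * (1 - q) / q ^ 2 + P / q * A) = c * (1 + A) * (P / q)) :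
    l / P * q ^ 2 / (1 - q) = c := by
  field_simp at h ⊢
  linear_combination h

lemma sq_eq_mul_of_eq_mul_sqrt {β E ξ U V : ℝ} (hβ : β ≠ 0) (hξ : 0 < ξ)
    (h₁ : β ^ 2 * ξ * U = V) (h₂ : V = β * E * √ξ) : E ^ 2 = V * U := by
  have hV_sq : V ^ 2 = β ^ 2 * ξ * E ^ 2 := by
    rw [h₂, mul_pow, mul_pow, Real.sq_sqrt hξ.le]
    ring
  refine mul_left_cancel₀ (by positivity : β ^ 2 * ξ ≠ 0) ?_
  linear_combination -hV_sq - V * h₁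

theorem critical_point_equations_general
    {S : Type*} [Fintype S]
    (lam : S → ℝ) (p : S → ℕ)
    (hp : ∀ s, 1 ≤ p s)
    (β E : ℝ) (hβ : 0 < β) (hE : 0 < E)
    (q : S → ℝ) (hq : ∀ s, q s ∈ Set.Ioo (0:ℝ) 1)
    (hI : ∀ s, lam s / (1 - q s) +
        β ^ 2 * (∏ u, q u ^ p u) *
          (-(p s : ℝ) * (1 - q s) / (q s) ^ 2 +
            (p s : ℝ) / q s * ∑ t, (p t : ℝ) * (1 - q t) / q t)
      = β * E * Real.sqrt (∏ u, q u ^ p u) * ((p s : ℝ) / q s))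
    (hII₁ : β ^ 2 * (∏ u, q u ^ p u) * (1 + ∑ t, (p t : ℝ) * (1 - q t) / q t)
      = -∑ t, lam t * Real.log (1 - q t))
    (hII₂ : (-∑ t, lam t * Real.log (1 - q t))
      = β * E * Real.sqrt (∏ u, q u ^ p u)) :
    (∀ s, lam s / (p s : ℝ) * (q s) ^ 2 / (1 - q s) =
        (-∑ t, lam t * Real.log (1 - q t)) /
          (1 + ∑ t, (p t : ℝ) * (1 - q t) / q t)) ∧
    β ^ 2 = ((-∑ t, lam t * Real.log (1 - q t)) /
        (1 + ∑ t, (p t : ℝ) * (1 - q t) / q t)) / (∏ u, q u ^ p u) ∧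
    E = Real.sqrt ((-∑ t, lam t * Real.log (1 - q t)) *
        (1 + ∑ t, (p t : ℝ) * (1 - q t) / q t)) := by
  set ξ := ∏ u, q u ^ p u
  set A := ∑ t, (p t : ℝ) * (1 - q t) / q t
  have hξ : 0 < ξ := Finset.prod_pos fun u _ ↦ pow_pos (hq u).1 _
  have hU : 0 < 1 + A := by
    have : 0 ≤ A := Finset.sum_nonneg fun t _ ↦
      div_nonneg (mul_nonneg (Nat.cast_nonneg _) (sub_nonneg.2 (hq t).2.le)) (hq t).1.le
    linarith
  have hΦ : β ^ 2 * ξ = (-∑ t, lam t * Real.log (1 - q t)) / (1 + A) := by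
    rw [← hII₁, mul_div_cancel_right₀ _ hU.ne']
  refine ⟨fun s ↦ ?_, ?_, ?_⟩
  · rw [← hII₂, ← hII₁] at hI
    rw [← hΦ]
    exact div_mul_sq_div_eq_of_stationary (hq s).1.ne' (sub_ne_zero.2 (hq s).2.ne')
      (Nat.cast_ne_zero.2 (Nat.one_le_iff_ne_zero.1 (hp s))) (hI s)
  · rw [← hΦ, mul_div_cancel_right₀ _ hξ.ne']
  · rw [← sq_eq_mul_of_eq_mul_sqrt hβ.ne' hξ hII₁ hII₂, Real.sqrt_sq hE.le]

/-- Suppose β > 0, E > 0 and q ∈ (0,1)^S satisfy, for all s, equation (I)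
λ(s)/(1−q(s)) + β²ξ(q)·(−p(s)(1−q(s))/q(s)² + (p(s)/q(s))∑ p(t)(1−q(t))/q(t))
= βE√ξ(q)·p(s)/q(s), and the two equalities (II)
β²ξ(q)(1 + ∑ p(t)(1−q(t))/q(t)) = −∑ λ(t)log(1−q(t)) = βE√ξ(q).
Then (i) (λ(s)/p(s))·q(s)²/(1−q(s)) = Φ(q) for all s; (ii) β² = Φ(q)/ξ(q);
(iii) E = √(V(q)·U(q)). Here ξ(q) = ∏ q(s)^{p(s)}, V(q) = −∑ λ(t)log(1−q(t)),
U(q) = 1 + ∑ p(t)(1−q(t))/q(t), Φ(q) = V(q)/U(q). -/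
theorem critical_point_equations
    {S : Type*} [Fintype S] [Nonempty S]
    (lam : S → ℝ) (p : S → ℕ)
    (hlam : ∀ s, lam s ∈ Set.Ioo (0:ℝ) 1) (hp : ∀ s, 1 ≤ p s)
    (β E : ℝ) (hβ : 0 < β) (hE : 0 < E)
    (q : S → ℝ) (hq : ∀ s, q s ∈ Set.Ioo (0:ℝ) 1)
    (hI : ∀ s, lam s / (1 - q s) +
        β ^ 2 * (∏ u, q u ^ p u) *
          (-(p s : ℝ) * (1 - q s) / (q s) ^ 2 +
            (p s : ℝ) / q s * ∑ t, (p t : ℝ) * (1 - q t) / q t)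
      = β * E * Real.sqrt (∏ u, q u ^ p u) * ((p s : ℝ) / q s))
    (hII₁ : β ^ 2 * (∏ u, q u ^ p u) * (1 + ∑ t, (p t : ℝ) * (1 - q t) / q t)
      = -∑ t, lam t * Real.log (1 - q t))
    (hII₂ : (-∑ t, lam t * Real.log (1 - q t))
      = β * E * Real.sqrt (∏ u, q u ^ p u)) :
    (∀ s, lam s / (p s : ℝ) * (q s) ^ 2 / (1 - q s) =
        (-∑ t, lam t * Real.log (1 - q t)) /
          (1 + ∑ t, (p t : ℝ) * (1 - q t) / q t)) ∧
    β ^ 2 = ((-∑ t, lam t * Real.log (1 - q t)) /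
        (1 + ∑ t, (p t : ℝ) * (1 - q t) / q t)) / (∏ u, q u ^ p u) ∧
    E = Real.sqrt ((-∑ t, lam t * Real.log (1 - q t)) *
        (1 + ∑ t, (p t : ℝ) * (1 - q t) / q t)) :=
  critical_point_equations_general lam p hp β E hβ hE q hq hI hII₁ hII₂
end

section
/- Suppose β > 0, E > 0 and q ∈ (0,1)^S satisfy, for every s ∈ S, the equation λ(s)/(1−q(s)) + β²ξ(q)·(−p(s)·(1−q(s))/q(s)² + (p(s)/q(s))·∑_{t∈S} p(t)·(1−q(t))/q(t)) = βE√(ξ(q))·p(s)/q(s). Define Γ(s) = β√(ξ(q))·(1−q(s))/q(s) and A = ∑_{t∈S} p(t)·Γ(t). Then: (i) for every s ∈ S, (λ(s)/p(s))·(1/Γ(s)) − Γ(s) = E − A; (ii) for every s ∈ S, Γ(s) = (−(E−A) + √((E−A)² + 4λ(s)/p(s)))/2; and (iii) Θ(E−A) = E, where Θ(y) = y + ∑_{t∈S} (p(t)/2)·(−y + √(y² + 4λ(t)/p(t))). -/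
/-! Write `c = β√ξ(q)`, so that `β²ξ(q) = c²`, `Γ(s) = c(1 - q(s))/q(s)` and
`A = c ∑ₜ p(t)(1 - q(t))/q(t)`. Multiplying the equation for `s` by `q(s)/(c p(s))` and using
`q(s)/(1 - q(s)) = c/Γ(s)` turns it into (i), i.e. `Γ(s)² + (E - A)Γ(s) - λ(s)/p(s) = 0`.
As `Γ(s) > 0` and `λ(s) > 0`, `Γ(s)` is the positive root of this quadratic, which is (ii);
substituting (ii) into `A = ∑ₜ p(t)Γ(t)` gives (iii). -/

open Finset

lemma div_mul_one_div_sub_eq_of_stationary {lam p q c B E : ℝ} (hp : p ≠ 0) (hq : q ≠ 0)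
    (hq1 : 1 - q ≠ 0) (hc : c ≠ 0)
    (h : lam / (1 - q) + c ^ 2 * (-p * (1 - q) / q ^ 2 + p / q * B) = c * E * (p / q)) :
    lam / p * (1 / (c * ((1 - q) / q))) - c * ((1 - q) / q) = E - c * B := by
  field_simp at h ⊢
  linear_combination h

lemma eq_neg_add_sqrt_div_two_of_mul_one_div_sub_eq {a γ y : ℝ} (ha : 0 ≤ a) (hγ : 0 < γ)
    (h : a * (1 / γ) - γ = y) : γ = (-y + √(y ^ 2 + 4 * a)) / 2 := by
  have ha_eq : a = γ * (y + γ) := by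
    field_simp at h
    linear_combination h
  have hdisc : y ^ 2 + 4 * a = (2 * γ + y) ^ 2 := by rw [ha_eq]; ring
  have hpos : 0 ≤ 2 * γ + y := by
    have : 0 ≤ a * (1 / γ) := by positivity
    linarith
  rw [hdisc, Real.sqrt_sq hpos]
  ring

theorem Gamma_equations_general
    {S : Type*} [Fintype S]
    (lam : S → ℝ) (p : S → ℕ)
    (hlam : ∀ s, lam s ∈ Set.Ioo (0:ℝ) 1) (hp : ∀ s, 1 ≤ p s)
    (β E : ℝ) (hβ : 0 < β)
    (q : S → ℝ) (hq : ∀ s, q s ∈ Set.Ioo (0:ℝ) 1)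
    (hI : ∀ s, lam s / (1 - q s) +
        β ^ 2 * (∏ u, q u ^ p u) *
          (-(p s : ℝ) * (1 - q s) / (q s) ^ 2 +
            (p s : ℝ) / q s * ∑ t, (p t : ℝ) * (1 - q t) / q t)
      = β * E * Real.sqrt (∏ u, q u ^ p u) * ((p s : ℝ) / q s))
    (Γ : S → ℝ)
    (hΓ : ∀ s, Γ s = β * Real.sqrt (∏ u, q u ^ p u) * ((1 - q s) / q s))
    (A : ℝ) (hA : A = ∑ t, (p t : ℝ) * Γ t) :
    (∀ s, lam s / (p s : ℝ) * (1 / Γ s) - Γ s = E - A) ∧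
    (∀ s, Γ s = (-(E - A) +
      Real.sqrt ((E - A) ^ 2 + 4 * lam s / (p s : ℝ))) / 2) ∧
    (E - A) + ∑ t, (p t : ℝ) / 2 *
        (-(E - A) + Real.sqrt ((E - A) ^ 2 + 4 * lam t / (p t : ℝ))) = E := by
  set c := β * √(∏ u, q u ^ p u) with hc_def
  have hc : 0 < c := mul_pos hβ (Real.sqrt_pos.2 (prod_pos fun u _ => pow_pos (hq u).1 _))
  have hc_sq : c ^ 2 = β ^ 2 * ∏ u, q u ^ p u := by
    rw [hc_def, mul_pow, Real.sq_sqrt (prod_nonneg fun u _ => pow_nonneg (hq u).1.le _)]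
  have hp_pos (s : S) : (0 : ℝ) < p s := by exact_mod_cast hp s
  have hA_eq : A = c * ∑ t, (p t : ℝ) * (1 - q t) / q t := by
    simp only [hA, hΓ, mul_sum]
    exact sum_congr rfl fun t _ => by ring
  have hΓ_pos (s : S) : 0 < Γ s := by
    have := sub_pos.2 (hq s).2
    have := (hq s).1
    rw [hΓ s]
    positivity
  have hrel (s : S) : lam s / (p s : ℝ) * (1 / Γ s) - Γ s = E - A := by
    rw [hΓ s, hA_eq]
    refine div_mul_one_div_sub_eq_of_stationary (hp_pos s).ne' (hq s).1.ne'
      (sub_pos.2 (hq s).2).ne' hc.ne' ?_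
    rw [hc_sq]
    linear_combination hI s
  have hroot (s : S) : Γ s = (-(E - A) + √((E - A) ^ 2 + 4 * lam s / (p s : ℝ))) / 2 := by
    rw [mul_div_assoc]
    exact eq_neg_add_sqrt_div_two_of_mul_one_div_sub_eq
      (div_pos (hlam s).1 (hp_pos s)).le (hΓ_pos s) (hrel s)
  refine ⟨hrel, hroot, ?_⟩
  have hsum : ∑ t, (p t : ℝ) / 2 * (-(E - A) + √((E - A) ^ 2 + 4 * lam t / (p t : ℝ))) =
      ∑ t, (p t : ℝ) * Γ t :=
    sum_congr rfl fun t _ => by rw [hroot t]; ring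
  rw [hsum, ← hA]
  ring

/-- Suppose β > 0, E > 0 and q ∈ (0,1)^S satisfy equation (I) for every s. With
Γ(s) = β√ξ(q)·(1−q(s))/q(s) and A = ∑ p(t)Γ(t), then:
(i) (λ(s)/p(s))·(1/Γ(s)) − Γ(s) = E − A for all s;
(ii) Γ(s) = (−(E−A) + √((E−A)² + 4λ(s)/p(s)))/2 for all s;
(iii) Θ(E−A) = E where Θ(y) = y + ∑ (p(t)/2)(−y + √(y² + 4λ(t)/p(t))). -/
theorem Gamma_equations
    {S : Type*} [Fintype S] [Nonempty S]
    (lam : S → ℝ) (p : S → ℕ)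
    (hlam : ∀ s, lam s ∈ Set.Ioo (0:ℝ) 1) (hp : ∀ s, 1 ≤ p s)
    (β E : ℝ) (hβ : 0 < β) (hE : 0 < E)
    (q : S → ℝ) (hq : ∀ s, q s ∈ Set.Ioo (0:ℝ) 1)
    (hI : ∀ s, lam s / (1 - q s) +
        β ^ 2 * (∏ u, q u ^ p u) *
          (-(p s : ℝ) * (1 - q s) / (q s) ^ 2 +
            (p s : ℝ) / q s * ∑ t, (p t : ℝ) * (1 - q t) / q t)
      = β * E * Real.sqrt (∏ u, q u ^ p u) * ((p s : ℝ) / q s))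
    (Γ : S → ℝ)
    (hΓ : ∀ s, Γ s = β * Real.sqrt (∏ u, q u ^ p u) * ((1 - q s) / q s))
    (A : ℝ) (hA : A = ∑ t, (p t : ℝ) * Γ t) :
    (∀ s, lam s / (p s : ℝ) * (1 / Γ s) - Γ s = E - A) ∧
    (∀ s, Γ s = (-(E - A) +
      Real.sqrt ((E - A) ^ 2 + 4 * lam s / (p s : ℝ))) / 2) ∧
    (E - A) + ∑ t, (p t : ℝ) / 2 *
        (-(E - A) + Real.sqrt ((E - A) ^ 2 + 4 * lam t / (p t : ℝ))) = E :=
  Gamma_equations_general lam p hlam hp β E hβ q hq hI Γ hΓ A hA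
end

section
/- Suppose S has at least two elements and p(s) ≥ 1 for every s ∈ S. Then for every nonempty open convex subset U of the positive orthant {x ∈ ℝ^S : x(s) > 0 for all s ∈ S}, the function ξ(x) = ∏_{s∈S} x(s)^{p(s)} is not convex on U. -/
open Filter Topology

/-!
Pick two coordinates `s₀ ≠ s₁` and move away from a point `x` of `U` along the curve
`t ↦ x · (1 + t (p s₁ e_{s₀} - p s₀ e_{s₁}))`. Along it `ξ` equals
`ξ x · (1 + p s₁ t) ^ p s₀ · (1 - p s₀ t) ^ p s₁`, and by the weighted AM–GM inequality this is
strictly less than `ξ x` for every small `t ≠ 0`. So `ξ x`, the value at the midpoint of the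
points with parameters `t` and `-t`, exceeds the average of the values there.
-/

theorem pow_mul_pow_lt_one_of_mul_add_mul_eq {a b : ℕ} (ha : 0 < a) {u v : ℝ} (hu : 0 < u)
    (hv : 0 < v) (hu1 : u ≠ 1) (h : a * u + b * v = a + b) : u ^ a * v ^ b < 1 := by
  have hlog : Real.log (u ^ a * v ^ b) < 0 := by
    rw [Real.log_mul (by positivity) (by positivity), Real.log_pow, Real.log_pow]
    have hu' : a * Real.log u < a * (u - 1) :=
      mul_lt_mul_of_pos_left (Real.log_lt_sub_one_of_pos hu hu1) (Nat.cast_pos.mpr ha)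
    have hv' : b * Real.log v ≤ b * (v - 1) :=
      mul_le_mul_of_nonneg_left (Real.log_le_sub_one_of_pos hv) (by positivity)
    linarith
  exact (Real.log_neg_iff (by positivity)).mp hlog

theorem eventually_one_add_mul_pow_mul_one_sub_mul_pow_lt_one {a b : ℕ} (ha : 0 < a)
    (hb : 0 < b) : ∀ᶠ t : ℝ in 𝓝 0, t ≠ 0 → (1 + b * t) ^ a * (1 - a * t) ^ b < 1 := by
  have hu : ∀ᶠ t in 𝓝 (0 : ℝ), 0 < 1 + (b : ℝ) * t :=
    continuousAt_const.eventually_lt (by fun_prop) (by simp)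
  have hv : ∀ᶠ t in 𝓝 (0 : ℝ), 0 < 1 - (a : ℝ) * t :=
    continuousAt_const.eventually_lt (by fun_prop) (by simp)
  filter_upwards [hu, hv] with t hu hv ht
  refine pow_mul_pow_lt_one_of_mul_add_mul_eq ha hu hv ?_ (by ring)
  simpa [hb.ne'] using ht

theorem prod_pow_one_add_smul_single_sub_single {S : Type*} [Fintype S] [DecidableEq S]
    (p : S → ℕ) {s₀ s₁ : S} (hne : s₀ ≠ s₁) (t : ℝ) :
    ∏ s, ((1 + t • (Pi.single s₀ (p s₁ : ℝ) - Pi.single s₁ (p s₀ : ℝ)) : S → ℝ) s) ^ p s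
      = (1 + p s₁ * t) ^ p s₀ * (1 - p s₀ * t) ^ p s₁ := by
  rw [Fintype.prod_eq_mul s₀ s₁ hne fun s hs => by simp [hs.1, hs.2]]
  simp only [Pi.add_apply, Pi.one_apply, Pi.smul_apply, Pi.sub_apply, Pi.single_eq_same,
    Pi.single_eq_of_ne hne, Pi.single_eq_of_ne hne.symm, sub_zero, zero_sub, smul_eq_mul, mul_neg]
  ring

theorem not_convexOn_prod_pow {S : Type*} [Fintype S] {p : S → ℕ} {s₀ s₁ : S} (hne : s₀ ≠ s₁)
    (h₀ : 0 < p s₀) (h₁ : 0 < p s₁) {U : Set (S → ℝ)} {x : S → ℝ} (hU : U ∈ 𝓝 x)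
    (hx : 0 < ∏ s, x s ^ p s) : ¬ ConvexOn ℝ U (fun x : S → ℝ => ∏ s, x s ^ p s) := by
  classical
  intro hconv
  let c : ℝ → S → ℝ := fun t => 1 + t • (Pi.single s₀ (p s₁ : ℝ) - Pi.single s₁ (p s₀ : ℝ))
  have hprod (t : ℝ) : ∏ s, (x * c t) s ^ p s
      = (∏ s, x s ^ p s) * ((1 + p s₁ * t) ^ p s₀ * (1 - p s₀ * t) ^ p s₁) := by
    simp only [Pi.mul_apply, mul_pow, Finset.prod_mul_distrib]
    rw [prod_pow_one_add_smul_single_sub_single p hne]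
  have hcurve : Tendsto (fun t => x * c t) (𝓝 0) (𝓝 x) :=
    (show Continuous fun t => x * c t by fun_prop).tendsto' 0 x (by simp [c])
  have hneg : Tendsto (fun t : ℝ => -t) (𝓝 0) (𝓝 0) := continuous_neg.tendsto' 0 0 neg_zero
  have hmemU := hcurve.eventually hU
  have hlt := eventually_one_add_mul_pow_mul_one_sub_mul_pow_lt_one h₀ h₁
  have hev := (hmemU.and (hneg.eventually hmemU)).and (hlt.and (hneg.eventually hlt))
  obtain ⟨t, ⟨⟨hyU, hzU⟩, hy, hz⟩, ht : t ≠ 0⟩ :=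
    ((hev.filter_mono nhdsWithin_le_nhds).and (self_mem_nhdsWithin (s := {0}ᶜ))).exists
  have hmid : (1 / 2 : ℝ) • (x * c t) + (1 / 2 : ℝ) • (x * c (-t)) = x := by
    ext s
    simp only [c, one_div, neg_smul, smul_eq_mul, Pi.add_apply, Pi.smul_apply, Pi.mul_apply,
      Pi.one_apply, Pi.sub_apply, Pi.neg_apply]
    ring
  have hhalf : (0 : ℝ) ≤ 1 / 2 := by norm_num
  have hconvt := hconv.2 hyU hzU hhalf hhalf (by norm_num)
  simp only [hmid, smul_eq_mul, hprod] at hconvt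
  nlinarith [hy ht, hz (neg_ne_zero.mpr ht)]

theorem xi_not_convex_general
    {S : Type*} [Fintype S] (hS : 1 < Fintype.card S)
    (p : S → ℕ) (hp : ∀ s, 1 ≤ p s)
    (U : Set (S → ℝ)) (hUne : U.Nonempty) (hUopen : IsOpen U)
    (hUpos : U ⊆ {x : S → ℝ | ∀ s, 0 < x s}) :
    ¬ ConvexOn ℝ U (fun x : S → ℝ => ∏ s, x s ^ p s) := by
  obtain ⟨x, hx⟩ := hUne
  obtain ⟨s₀, s₁, hne⟩ := Fintype.exists_pair_of_one_lt_card hS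
  exact not_convexOn_prod_pow hne (hp s₀) (hp s₁) (hUopen.mem_nhds hx)
    (Finset.prod_pos fun s _ => pow_pos (hUpos hx s) _)

/-- If S has at least two elements and p(s) ≥ 1 for all s, then for every nonempty
open convex subset U of the positive orthant, ξ(x) = ∏ x(s)^{p(s)} is not convex
on U. -/
theorem xi_not_convex
    {S : Type*} [Fintype S] (hS : 1 < Fintype.card S)
    (p : S → ℕ) (hp : ∀ s, 1 ≤ p s)
    (U : Set (S → ℝ)) (hUne : U.Nonempty) (hUopen : IsOpen U)
    (hUconv : Convex ℝ U)
    (hUpos : U ⊆ {x : S → ℝ | ∀ s, 0 < x s}) :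
    ¬ ConvexOn ℝ U (fun x : S → ℝ => ∏ s, x s ^ p s) :=
  xi_not_convex_general hS p hp U hUne hUopen hUpos
end

section
/- For every q, x ∈ ℝ^S the following polynomial identity holds: ∏_{s∈S} ((1−q(s))·x(s) + q(s))^{p(s)} − ∏_{s∈S} q(s)^{p(s)} − ∑_{s∈S} p(s)·q(s)^{p(s)−1}·(∏_{t∈S, t≠s} q(t)^{p(t)})·(1−q(s))·x(s) = ∑_{k} Δ_{q,k}²·∏_{s∈S} x(s)^{k(s)}, where the sum on the right ranges over all k : S → ℕ with k(s) ≤ p(s) for every s and ∑_{s∈S} k(s) ≥ 2, and Δ_{q,k}² = ∏_{s∈S} C(p(s),k(s))·(1−q(s))^{k(s)}·q(s)^{p(s)−k(s)} with C(n,m) the binomial coefficient. -/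
/-!
Expanding each factor `((1 - q s) x s + q s) ^ p s` by the binomial theorem writes the product
as a sum, over multi-indices `k ≤ p`, of `Δ_{q,k}² ∏ x s ^ k s`. The multi-indices of total
degree `0` and `1` (the zero function and the indicators of single points) contribute exactly
the two subtracted terms.
-/

open Finset

section DegreeSplit

variable {S : Type*} [DecidableEq S] {n : S → ℕ}

lemma val_pi_single_one {s : S} (hs : n s ≠ 0) (t : S) :
    ((Pi.single s 1 : ∀ t, Fin (n t + 1)) t : ℕ) = if t = s then 1 else 0 := by
  by_cases h : t = s
  · subst h
    simp [Nat.one_mod_eq_one.mpr (by omega : n t + 1 ≠ 1)]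
  · simp [h]

variable [Fintype S]

lemma exists_eq_pi_single_one_of_sum_eq_one {k : ∀ s, Fin (n s + 1)}
    (hk : ∑ s, (k s : ℕ) = 1) : ∃ s, n s ≠ 0 ∧ k = Pi.single s 1 := by
  obtain ⟨s, -, hs⟩ : ∃ s ∈ univ, (k s : ℕ) ≠ 0 := by
    by_contra! h
    simp [sum_eq_zero h] at hk
  have hsplit := add_sum_erase univ (fun t => (k t : ℕ)) (mem_univ s)
  have hks : (k s : ℕ) = 1 := by omega
  have hrest : ∀ t ∈ univ.erase s, (k t : ℕ) = 0 := sum_eq_zero_iff.mp (by omega)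
  have hns : n s ≠ 0 := by have := (k s).isLt; omega
  refine ⟨s, hns, funext fun t => Fin.ext ?_⟩
  rw [val_pi_single_one hns]
  split_ifs with h
  · exact h ▸ hks
  · exact hrest t (mem_erase.mpr ⟨h, mem_univ t⟩)

variable {R : Type*} [CommSemiring R]

lemma sum_filter_sum_val_eq_zero (a : S → ℕ → R) :
    ∑ k ∈ univ.filter (fun k : ∀ s, Fin (n s + 1) => ∑ s, (k s : ℕ) = 0),
      ∏ s, a s (k s) = ∏ s, a s 0 := by
  have : univ.filter (fun k : ∀ s, Fin (n s + 1) => ∑ s, (k s : ℕ) = 0) = {0} := by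
    ext k
    simp only [mem_filter, mem_univ, true_and, mem_singleton, sum_eq_zero_iff, true_implies,
      funext_iff, Fin.ext_iff, Pi.zero_apply, Fin.val_zero]
  rw [this, sum_singleton]
  rfl

lemma sum_filter_sum_val_eq_one (a : S → ℕ → R) (ha : ∀ s, n s = 0 → a s 1 = 0) :
    ∑ k ∈ univ.filter (fun k : ∀ s, Fin (n s + 1) => ∑ s, (k s : ℕ) = 1),
      ∏ s, a s (k s) = ∑ s, a s 1 * ∏ t ∈ univ.erase s, a t 0 := by
  rw [← sum_filter_of_ne (p := fun s => n s ≠ 0) fun s _ h hs => h (by simp [ha s hs])]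
  symm
  refine sum_nbij (fun s => Pi.single s 1) ?_ ?_ ?_ ?_
  · intro s hs
    simp [val_pi_single_one (mem_filter.mp hs).2]
  · intro s hs s' hs' h
    have := congrArg (fun k : ∀ t, Fin (n t + 1) => (k s : ℕ)) h
    simp only [val_pi_single_one (mem_filter.mp hs).2,
      val_pi_single_one (mem_filter.mp hs').2] at this
    by_contra hne
    simp [hne] at this
  · intro k hk
    obtain ⟨s, hs, rfl⟩ := exists_eq_pi_single_one_of_sum_eq_one (mem_filter.mp hk).2
    exact ⟨s, by simpa using hs, rfl⟩
  · intro s hs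
    replace hs : n s ≠ 0 := (mem_filter.mp hs).2
    rw [← mul_prod_erase univ _ (mem_univ s)]
    congr 1
    · rw [val_pi_single_one hs, if_pos rfl]
    · refine prod_congr rfl fun t ht => ?_
      rw [val_pi_single_one hs, if_neg (mem_erase.mp ht).1]

end DegreeSplit

lemma Finset.sum_eq_sum_filter_eq_zero_add_eq_one_add_two_le {ι M : Type*} [Fintype ι]
    [AddCommMonoid M] (d : ι → ℕ) (F : ι → M) :
    ∑ i, F i = ∑ i ∈ univ.filter (d · = 0), F i + ∑ i ∈ univ.filter (d · = 1), F i
      + ∑ i ∈ univ.filter (2 ≤ d ·), F i := by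
  simp only [sum_filter, ← sum_add_distrib]
  refine sum_congr rfl fun i _ => ?_
  split_ifs <;> first | omega | simp

lemma mul_add_pow_eq_sum_fin {R : Type*} [CommSemiring R] (u v x : R) (m : ℕ) :
    (u * x + v) ^ m =
      ∑ j : Fin (m + 1), (m.choose j : R) * u ^ (j : ℕ) * v ^ (m - j) * x ^ (j : ℕ) := by
  rw [add_pow, ← Fin.sum_univ_eq_sum_range]
  refine sum_congr rfl fun j _ => ?_
  ring

theorem mixture_expansion_general
    {S : Type*} [Fintype S] [DecidableEq S]
    (p : S → ℕ)
    (q x : S → ℝ) :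
    (∏ s, ((1 - q s) * x s + q s) ^ p s) - (∏ s, q s ^ p s)
      - ∑ s, (p s : ℝ) * q s ^ (p s - 1) *
          (∏ t ∈ Finset.univ.erase s, q t ^ p t) * (1 - q s) * x s
    = ∑ k ∈ Finset.univ.filter
          (fun k : (∀ s : S, Fin (p s + 1)) => 2 ≤ ∑ s, (k s : ℕ)),
        (∏ s, (Nat.choose (p s) (k s) : ℝ) *
            (1 - q s) ^ (k s : ℕ) * q s ^ (p s - (k s : ℕ))) *
          ∏ s, x s ^ (k s : ℕ) := by
  set a : S → ℕ → ℝ := fun s j => (p s).choose j * (1 - q s) ^ j * q s ^ (p s - j) * x s ^ j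
  have hterm (k : ∀ s, Fin (p s + 1)) :
      (∏ s, (Nat.choose (p s) (k s) : ℝ) *
          (1 - q s) ^ (k s : ℕ) * q s ^ (p s - (k s : ℕ))) *
        ∏ s, x s ^ (k s : ℕ) = ∏ s, a s (k s) :=
    prod_mul_distrib.symm
  have hfactor (s : S) : ((1 - q s) * x s + q s) ^ p s = ∑ j : Fin (p s + 1), a s j :=
    mul_add_pow_eq_sum_fin (1 - q s) (q s) (x s) (p s)
  have ha₁ (s : S) (hs : p s = 0) : a s 1 = 0 := by simp [a, hs]
  rw [sum_congr rfl fun k _ => hterm k,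
    prod_congr rfl fun s _ => hfactor s, Fintype.prod_sum,
    sum_eq_sum_filter_eq_zero_add_eq_one_add_two_le (fun k => ∑ s, (k s : ℕ)),
    sum_filter_sum_val_eq_zero, sum_filter_sum_val_eq_one a ha₁]
  have h₀ : ∏ s, a s 0 = ∏ s, q s ^ p s := by simp [a]
  have h₁ : ∑ s, a s 1 * ∏ t ∈ univ.erase s, a t 0 = ∑ s, (p s : ℝ) * q s ^ (p s - 1) *
      (∏ t ∈ univ.erase s, q t ^ p t) * (1 - q s) * x s :=
    sum_congr rfl fun s _ => by
      simp only [a, Nat.choose_zero_right, Nat.choose_one_right, Nat.cast_one, pow_zero, pow_one,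
        tsub_zero, one_mul, mul_one]
      ring
  rw [h₀, h₁]
  ring

/-- The polynomial identity
∏ ((1−q(s))x(s) + q(s))^{p(s)} − ∏ q(s)^{p(s)}
  − ∑_s p(s)·q(s)^{p(s)−1}·(∏_{t≠s} q(t)^{p(t)})·(1−q(s))·x(s)
= ∑_{k ≤ p, |k| ≥ 2} Δ_{q,k}²·∏ x(s)^{k(s)}, where
Δ_{q,k}² = ∏ C(p(s),k(s))·(1−q(s))^{k(s)}·q(s)^{p(s)−k(s)}. -/
theorem mixture_expansion
    {S : Type*} [Fintype S] [Nonempty S] [DecidableEq S]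
    (p : S → ℕ) (hp : ∀ s, 1 ≤ p s)
    (q x : S → ℝ) :
    (∏ s, ((1 - q s) * x s + q s) ^ p s) - (∏ s, q s ^ p s)
      - ∑ s, (p s : ℝ) * q s ^ (p s - 1) *
          (∏ t ∈ Finset.univ.erase s, q t ^ p t) * (1 - q s) * x s
    = ∑ k ∈ Finset.univ.filter
          (fun k : (∀ s : S, Fin (p s + 1)) => 2 ≤ ∑ s, (k s : ℕ)),
        (∏ s, (Nat.choose (p s) (k s) : ℝ) *
            (1 - q s) ^ (k s : ℕ) * q s ^ (p s - (k s : ℕ))) *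
          ∏ s, x s ^ (k s : ℕ) :=
  mixture_expansion_general p q x
end
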